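/- arXiv:0902.4536 — 5 statements merged into one kernel-verified Lean document; each statement's English description precedes it below -/
import Mathlib

section
/- Let V be a finite-dimensional real vector space and Q a nondegenerate quadratic form on V. Let M be a finite-dimensional Cℓ(Q)-module and h a nondegenerate bilinear form on M. If S₀ ⊆ M is a linear subspace with 4·dim S₀ > 3·dim M, then the only vector v ∈ V satisfying h(γ_v s, t) = 0 for all s, t ∈ S₀ is v = 0. (This is the algebraic core of Theorem 2.1 (i)–(ii): a subspace of dimension greater than 3/4 of the spinor module admits no nonzero vector v with γ_v S₀ ⊆ S₀^⊥.) -/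
/-!
Fix `v ≠ 0` and pick `w` with `c := polar Q v w ≠ 0` (nondegeneracy of `Q`).
The Clifford relation `γ_v γ_w + γ_w γ_v = c` shows `ker γ_v ⊆ im γ_v`, so
`dim ker γ_v ≤ (dim M)/2`. The hypothesis says `γ_v S₀ ⊆ S₀^⊥`, and `dim S₀^⊥ = dim M - dim S₀`
because `h` is nondegenerate. Hence
`dim S₀ - (dim M)/2 ≤ dim γ_v S₀ ≤ dim M - dim S₀`, i.e. `4 dim S₀ ≤ 3 dim M`.
-/

/-- The Clifford multiplication `γ_v : s ↦ ι(v) • s` as an `ℝ`-linear endomorphism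
of a `Cℓ(Q)`-module `M`. -/
noncomputable def gammaLin {V : Type*} [AddCommGroup V] [Module ℝ V]
    (Q : QuadraticForm ℝ V) {M : Type*} [AddCommGroup M] [Module ℝ M]
    [Module (CliffordAlgebra Q) M] [IsScalarTower ℝ (CliffordAlgebra Q) M]
    (v : V) : M →ₗ[ℝ] M where
  toFun s := CliffordAlgebra.ι Q v • s
  map_add' s t := smul_add _ s t
  map_smul' r s := (smul_comm r (CliffordAlgebra.ι Q v) s).symm

open Module

namespace LinearMap

variable {K E : Type*} [Field K] [AddCommGroup E] [Module K E]

theorem ker_le_range_of_comp_add_comp_eq_smul {f g : E →ₗ[K] E} {c : K} (hc : c ≠ 0)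
    (hfg : f ∘ₗ g + g ∘ₗ f = c • LinearMap.id) : ker f ≤ range f := by
  intro x hx
  refine ⟨c⁻¹ • g x, ?_⟩
  have hx' : f (g x) = c • x := by
    simpa [mem_ker.mp hx] using LinearMap.congr_fun hfg x
  rw [map_smul, hx', smul_smul, inv_mul_cancel₀ hc, one_smul]

theorem two_mul_finrank_ker_le_of_ker_le_range [FiniteDimensional K E] {f : E →ₗ[K] E}
    (hf : ker f ≤ range f) : 2 * finrank K (ker f) ≤ finrank K E := by
  have := Submodule.finrank_mono hf
  have := finrank_range_add_finrank_ker f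
  omega

end LinearMap

theorem Submodule.finrank_le_finrank_map_add_finrank_ker {K E F : Type*} [Field K]
    [AddCommGroup E] [Module K E] [AddCommGroup F] [Module K F] [FiniteDimensional K E]
    (f : E →ₗ[K] F) (S : Submodule K E) :
    finrank K S ≤ finrank K (S.map f) + finrank K (LinearMap.ker f) := by
  have hrank := LinearMap.finrank_range_add_finrank_ker (f ∘ₗ S.subtype)
  rw [LinearMap.range_comp, Submodule.range_subtype] at hrank
  have hker : (LinearMap.ker (f ∘ₗ S.subtype)).map S.subtype ≤ LinearMap.ker f := by
    rintro _ ⟨x, hx, rfl⟩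
    exact hx
  have := Submodule.finrank_mono hker
  rw [Submodule.finrank_map_subtype_eq] at this
  omega

section Clifford

variable {V : Type*} [AddCommGroup V] [Module ℝ V] (Q : QuadraticForm ℝ V)
  {M : Type*} [AddCommGroup M] [Module ℝ M]
  [Module (CliffordAlgebra Q) M] [IsScalarTower ℝ (CliffordAlgebra Q) M]

theorem gammaLin_comp_add_comp (v w : V) :
    gammaLin Q (M := M) v ∘ₗ gammaLin Q w + gammaLin Q w ∘ₗ gammaLin Q v =
      QuadraticMap.polar Q v w • LinearMap.id := by
  ext x
  change CliffordAlgebra.ι Q v • CliffordAlgebra.ι Q w • x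
      + CliffordAlgebra.ι Q w • CliffordAlgebra.ι Q v • x = QuadraticMap.polar Q v w • x
  rw [smul_smul, smul_smul, ← add_smul, CliffordAlgebra.ι_mul_ι_add_swap, algebraMap_smul]

theorem two_mul_finrank_ker_gammaLin_le [FiniteDimensional ℝ M]
    (hQ : (QuadraticMap.polarBilin Q).Nondegenerate) {v : V} (hv : v ≠ 0) :
    2 * finrank ℝ (LinearMap.ker (gammaLin Q (M := M) v)) ≤ finrank ℝ M := by
  obtain ⟨w, hw⟩ : ∃ w, QuadraticMap.polar Q v w ≠ 0 := by
    by_contra! hvw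
    exact hv (hQ.1 v hvw)
  exact LinearMap.two_mul_finrank_ker_le_of_ker_le_range
    (LinearMap.ker_le_range_of_comp_add_comp_eq_smul hw (gammaLin_comp_add_comp Q v w))

end Clifford

theorem killing_spinors_three_quarters_general
    {V : Type*} [AddCommGroup V] [Module ℝ V]
    (Q : QuadraticForm ℝ V) (hQ : (QuadraticMap.polarBilin Q).Nondegenerate)
    {M : Type*} [AddCommGroup M] [Module ℝ M] [FiniteDimensional ℝ M]
    [Module (CliffordAlgebra Q) M] [IsScalarTower ℝ (CliffordAlgebra Q) M]
    (h : LinearMap.BilinForm ℝ M) (hh : h.Nondegenerate)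
    (S₀ : Submodule ℝ M)
    (hdim : 3 * Module.finrank ℝ M < 4 * Module.finrank ℝ S₀)
    (v : V)
    (hv : ∀ s ∈ S₀, ∀ t ∈ S₀, h (gammaLin Q v s) t = 0) :
    v = 0 := by
  by_contra hv0
  have hker := two_mul_finrank_ker_gammaLin_le Q (M := M) hQ hv0
  have hmap : S₀.map (gammaLin Q v) ≤ h.flip.orthogonal S₀ := by
    rintro _ ⟨s, hs, rfl⟩ t ht
    exact hv s hs t ht
  have horth := LinearMap.BilinForm.finrank_orthogonal hh.flip S₀
  have hS₀ := Submodule.finrank_le_finrank_map_add_finrank_ker (gammaLin Q v) S₀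
  have hmap_rank := Submodule.finrank_mono hmap
  have hS₀_le := Submodule.finrank_le S₀
  omega

/-- If `S₀` is a subspace of a Clifford module `M` with `dim S₀ > (3/4) dim M`
(for `Q` nondegenerate and `h` a nondegenerate bilinear form on `M`), then the only
vector `v` with `h(γ_v S₀, S₀) = 0` is `v = 0`. -/
theorem killing_spinors_three_quarters
    {V : Type*} [AddCommGroup V] [Module ℝ V] [FiniteDimensional ℝ V]
    (Q : QuadraticForm ℝ V) (hQ : (QuadraticMap.polarBilin Q).Nondegenerate)
    {M : Type*} [AddCommGroup M] [Module ℝ M] [FiniteDimensional ℝ M]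
    [Module (CliffordAlgebra Q) M] [IsScalarTower ℝ (CliffordAlgebra Q) M]
    (h : LinearMap.BilinForm ℝ M) (hh : h.Nondegenerate)
    (S₀ : Submodule ℝ M)
    (hdim : 3 * Module.finrank ℝ M < 4 * Module.finrank ℝ S₀)
    (v : V)
    (hv : ∀ s ∈ S₀, ∀ t ∈ S₀, h (gammaLin Q v s) t = 0) :
    v = 0 :=
  killing_spinors_three_quarters_general Q hQ h hh S₀ hdim v hv
end

section
/- Let V be a finite-dimensional real vector space and Q an anisotropic quadratic form on V. Let M be a finite-dimensional Cℓ(Q)-module and h a nondegenerate bilinear form on M. If S₀ ⊆ M is a linear subspace with 2·dim S₀ > dim M, then the only vector v ∈ V satisfying h(γ_v s, t) = 0 for all s, t ∈ S₀ is v = 0. (This is the algebraic core of Theorem 2.1 (v) for definite metrics: for definite scalar products the bound 3/4 can be relaxed to 1/2.) -/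
/-!
If `Q v ≠ 0` then `γ_v² = Q(v)` makes `γ_v` injective, so `γ_v S₀` has the dimension of `S₀`.
The hypothesis says `S₀` lies in the `h`-orthogonal of `γ_v S₀`, which for nondegenerate `h` has
dimension `dim M - dim S₀`; hence `2 dim S₀ ≤ dim M`.
-/

namespace LinearMap.BilinForm

open Module

theorem two_mul_finrank_le_of_apply_map_eq_zero {K E : Type*} [Field K] [AddCommGroup E]
    [Module K E] [FiniteDimensional K E] {B : LinearMap.BilinForm K E} (hB : B.Nondegenerate)
    {f : E →ₗ[K] E} (hf : Function.Injective f) {S : Submodule K E}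
    (hS : ∀ s ∈ S, ∀ t ∈ S, B (f s) t = 0) :
    2 * finrank K S ≤ finrank K E := by
  have hle : S ≤ B.orthogonal (S.map f) := by
    rintro t ht _ ⟨s, hs, rfl⟩
    exact hS s hs t ht
  have hmap : finrank K (S.map f) = finrank K S := (S.equivMapOfInjective f hf).finrank_eq.symm
  have hS_le := Submodule.finrank_mono hle
  rw [finrank_orthogonal hB, hmap] at hS_le
  have := Submodule.finrank_le S
  omega

end LinearMap.BilinForm

section Clifford

variable {V : Type*} [AddCommGroup V] [Module ℝ V] (Q : QuadraticForm ℝ V)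
  {M : Type*} [AddCommGroup M] [Module ℝ M]
  [Module (CliffordAlgebra Q) M] [IsScalarTower ℝ (CliffordAlgebra Q) M]

theorem gammaLin_gammaLin (v : V) (s : M) : gammaLin Q v (gammaLin Q v s) = Q v • s := by
  change CliffordAlgebra.ι Q v • CliffordAlgebra.ι Q v • s = Q v • s
  rw [smul_smul, CliffordAlgebra.ι_sq_scalar, algebraMap_smul]

theorem gammaLin_injective {v : V} (hv : Q v ≠ 0) :
    Function.Injective (gammaLin Q (M := M) v) := fun a b hab => by
  have := congrArg (gammaLin Q v) hab
  rwa [gammaLin_gammaLin, gammaLin_gammaLin, smul_right_inj hv] at this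

end Clifford

theorem killing_spinors_one_half_definite_general
    {V : Type*} [AddCommGroup V] [Module ℝ V]
    (Q : QuadraticForm ℝ V) (hQ : Q.Anisotropic)
    {M : Type*} [AddCommGroup M] [Module ℝ M] [FiniteDimensional ℝ M]
    [Module (CliffordAlgebra Q) M] [IsScalarTower ℝ (CliffordAlgebra Q) M]
    (h : LinearMap.BilinForm ℝ M) (hh : h.Nondegenerate)
    (S₀ : Submodule ℝ M)
    (hdim : Module.finrank ℝ M < 2 * Module.finrank ℝ S₀)
    (v : V)
    (hv : ∀ s ∈ S₀, ∀ t ∈ S₀, h (gammaLin Q v s) t = 0) :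
    v = 0 := by
  by_contra hv0
  have hQv : Q v ≠ 0 := fun hQv => hv0 (hQ v hQv)
  have := LinearMap.BilinForm.two_mul_finrank_le_of_apply_map_eq_zero hh
    (gammaLin_injective Q hQv) hv
  omega

/-- For an anisotropic (definite) quadratic form `Q`, if `S₀` is a subspace of a Clifford
module `M` with `dim S₀ > (1/2) dim M` and `h` is a nondegenerate bilinear form on `M`,
then the only vector `v` with `h(γ_v S₀, S₀) = 0` is `v = 0`. -/
theorem killing_spinors_one_half_definite
    {V : Type*} [AddCommGroup V] [Module ℝ V] [FiniteDimensional ℝ V]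
    (Q : QuadraticForm ℝ V) (hQ : Q.Anisotropic)
    {M : Type*} [AddCommGroup M] [Module ℝ M] [FiniteDimensional ℝ M]
    [Module (CliffordAlgebra Q) M] [IsScalarTower ℝ (CliffordAlgebra Q) M]
    (h : LinearMap.BilinForm ℝ M) (hh : h.Nondegenerate)
    (S₀ : Submodule ℝ M)
    (hdim : Module.finrank ℝ M < 2 * Module.finrank ℝ S₀)
    (v : V)
    (hv : ∀ s ∈ S₀, ∀ t ∈ S₀, h (gammaLin Q v s) t = 0) :
    v = 0 :=
  killing_spinors_one_half_definite_general Q hQ h hh S₀ hdim v hv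
end

section
/- Let V be a finite-dimensional real vector space, Q a quadratic form on V, and M a finite-dimensional simple Cℓ(Q)-module (i.e. M ≠ 0 and its only Cℓ(Q)-submodules are 0 and M). Let h be a nondegenerate bilinear form on M that is symmetric or skew-symmetric, and let S₀ ⊆ M be a maximally isotropic subspace, i.e. S₀ = S₀^⊥ := {t ∈ M : h(s,t) = 0 for all s ∈ S₀}. Then there exist v ∈ V and s, t ∈ S₀ with h(γ_v s, t) ≠ 0. (This is the final claim of the Proposition in Section 2: if S₀ is maximally isotropic then the bracket [S₀,S₀]₁ is nonzero, because γ_v S₀ ⊆ S₀ for all v is impossible when M is an irreducible Clifford module.) -/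
namespace CliffordAlgebra

variable {R V M : Type*} [CommRing R] [AddCommGroup V] [Module R V] {Q : QuadraticForm R V}
  [AddCommGroup M] [Module R M] [Module (CliffordAlgebra Q) M]
  [IsScalarTower R (CliffordAlgebra Q) M]

theorem smul_mem_of_forall_ι_smul_mem {p : Submodule R M} (hp : ∀ v, ∀ s ∈ p, ι Q v • s ∈ p)
    (a : CliffordAlgebra Q) {s : M} (hs : s ∈ p) : a • s ∈ p := by
  induction a using CliffordAlgebra.induction generalizing s with
  | algebraMap r => simpa only [algebraMap_smul] using p.smul_mem r hs
  | ι v => exact hp v s hs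
  | mul a b ha hb => simpa only [mul_smul] using ha (hb hs)
  | add a b ha hb => simpa only [add_smul] using p.add_mem (ha hs) (hb hs)

theorem eq_bot_or_eq_top_of_forall_ι_smul_mem [IsSimpleModule (CliffordAlgebra Q) M]
    {p : Submodule R M} (hp : ∀ v, ∀ s ∈ p, ι Q v • s ∈ p) : p = ⊥ ∨ p = ⊤ := by
  let P : Submodule (CliffordAlgebra Q) M :=
    { p with smul_mem' := fun a _ hs => smul_mem_of_forall_ι_smul_mem hp a hs }
  have hP : P.restrictScalars R = p := rfl
  rw [← hP, Submodule.restrictScalars_eq_bot_iff, Submodule.restrictScalars_eq_top_iff]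
  exact eq_bot_or_eq_top P

end CliffordAlgebra

namespace LinearMap.BilinForm

variable {R M : Type*} [CommRing R] [AddCommGroup M] [Module R M] {B : LinearMap.BilinForm R M}
  {N : Submodule R M}

theorem isRefl_of_symm_or_skew (hB : (∀ x y, B x y = B y x) ∨ (∀ x y, B x y = -B y x)) :
    B.IsRefl := by
  intro x y hxy
  rcases hB with hB | hB <;> simp [hB y x, hxy]

theorem IsRefl.mem_of_orthogonal_eq_self (hB : B.IsRefl) (hN : B.orthogonal N = N) {m : M}
    (hm : ∀ n ∈ N, B m n = 0) : m ∈ N :=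
  hN ▸ fun n hn => hB m n (hm n hn)

theorem ne_bot_of_orthogonal_eq_self [Nontrivial M] (hN : B.orthogonal N = N) : N ≠ ⊥ := by
  rintro rfl
  exact bot_ne_top (hN.symm.trans orthogonal_bot)

theorem ne_top_of_orthogonal_eq_self [Nontrivial M] (hB : B.Nondegenerate)
    (hN : B.orthogonal N = N) : N ≠ ⊤ := by
  rintro rfl
  exact bot_ne_top ((orthogonal_top_eq_bot hB).symm.trans hN)

end LinearMap.BilinForm

theorem bracket_nonzero_of_maximally_isotropic_general
    {V : Type*} [AddCommGroup V] [Module ℝ V]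
    (Q : QuadraticForm ℝ V)
    {M : Type*} [AddCommGroup M] [Module ℝ M]
    [Module (CliffordAlgebra Q) M] [IsScalarTower ℝ (CliffordAlgebra Q) M]
    [IsSimpleModule (CliffordAlgebra Q) M]
    (h : LinearMap.BilinForm ℝ M) (hh : h.Nondegenerate)
    (hsym : (∀ s t : M, h s t = h t s) ∨ (∀ s t : M, h s t = - h t s))
    (S₀ : Submodule ℝ M)
    (hmax : ∀ t : M, t ∈ S₀ ↔ ∀ s ∈ S₀, h s t = 0) :
    ∃ (v : V) (s t : M), s ∈ S₀ ∧ t ∈ S₀ ∧ h (gammaLin Q v s) t ≠ 0 := by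
  have hS₀ : h.orthogonal S₀ = S₀ := SetLike.ext fun t => (hmax t).symm
  have : Nontrivial M := IsSimpleModule.nontrivial (CliffordAlgebra Q) M
  by_contra! hzero
  have hstable : ∀ v, ∀ s ∈ S₀, CliffordAlgebra.ι Q v • s ∈ S₀ := fun v s hs =>
    (LinearMap.BilinForm.isRefl_of_symm_or_skew hsym).mem_of_orthogonal_eq_self hS₀
      fun t ht => hzero v s t hs ht
  rcases CliffordAlgebra.eq_bot_or_eq_top_of_forall_ι_smul_mem hstable with hbot | htop
  · exact LinearMap.BilinForm.ne_bot_of_orthogonal_eq_self hS₀ hbot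
  · exact LinearMap.BilinForm.ne_top_of_orthogonal_eq_self hh hS₀ htop

/-- If `M` is a simple Clifford module, `h` a nondegenerate symmetric or skew-symmetric
bilinear form on `M`, and `S₀` a maximally isotropic subspace (`S₀ = S₀^⊥`), then
there are `v ∈ V` and `s, t ∈ S₀` with `h(γ_v s, t) ≠ 0`. -/
theorem bracket_nonzero_of_maximally_isotropic
    {V : Type*} [AddCommGroup V] [Module ℝ V] [FiniteDimensional ℝ V]
    (Q : QuadraticForm ℝ V)
    {M : Type*} [AddCommGroup M] [Module ℝ M] [FiniteDimensional ℝ M]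
    [Module (CliffordAlgebra Q) M] [IsScalarTower ℝ (CliffordAlgebra Q) M]
    [IsSimpleModule (CliffordAlgebra Q) M]
    (h : LinearMap.BilinForm ℝ M) (hh : h.Nondegenerate)
    (hsym : (∀ s t : M, h s t = h t s) ∨ (∀ s t : M, h s t = - h t s))
    (S₀ : Submodule ℝ M)
    (hmax : ∀ t : M, t ∈ S₀ ↔ ∀ s ∈ S₀, h s t = 0) :
    ∃ (v : V) (s t : M), s ∈ S₀ ∧ t ∈ S₀ ∧ h (gammaLin Q v s) t ≠ 0 :=
  bracket_nonzero_of_maximally_isotropic_general Q h hh hsym S₀ hmax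
end

section
/- Let V be a finite-dimensional real vector space and g a nondegenerate indefinite symmetric bilinear form on V, i.e. there exist x, y ∈ V with g(x,x) > 0 and g(y,y) < 0. If β is a symmetric bilinear form on V such that β(v,v) = 0 for every v ∈ V with g(v,v) = 0, then there exists c ∈ ℝ with β = c·g. (This is the key step in the proof of Proposition 1.2 (ii): the null cone of an indefinite scalar product determines the scalar product up to scale.) -/
/-!
For `g u u > 0 > g w w` the quadratic `t ↦ g (u + t • w) (u + t • w)` has positive
discriminant, so the line `u + ℝ w` meets the null cone of `g` in two points. The quadratic
`t ↦ β (u + t • w) (u + t • w)` vanishes there too, hence is proportional to the first one,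
and comparing coefficients gives `β w w * g u u = g w w * β u u`. Thus `β v v / g v v` is the
same constant on all non-null vectors, and polarization finishes the proof.
-/

open LinearMap (BilinForm)

theorem exists_ne_quadratic_eq_zero {K : Type*} [Field K] [NeZero (2 : K)] {a b c s : K}
    (ha : a ≠ 0) (hs : discrim a b c = s * s) (hs₀ : s ≠ 0) :
    ∃ x y, x ≠ y ∧ a * (x * x) + b * x + c = 0 ∧ a * (y * y) + b * y + c = 0 := by
  refine ⟨(-b + s) / (2 * a), (-b - s) / (2 * a), ?_,
    (quadratic_eq_zero_iff ha hs _).mpr (.inl rfl), (quadratic_eq_zero_iff ha hs _).mpr (.inr rfl)⟩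
  have h2a : 2 * a ≠ 0 := mul_ne_zero two_ne_zero ha
  rw [Ne, div_left_inj' h2a]
  intro h
  exact hs₀ (mul_left_cancel₀ two_ne_zero (by linear_combination h : (2 : K) * s = 2 * 0))

theorem mul_eq_mul_of_quadratics_eq_zero {K : Type*} [Field K] {a b c a' b' c' x y : K}
    (hxy : x ≠ y)
    (hx : a * (x * x) + b * x + c = 0) (hy : a * (y * y) + b * y + c = 0)
    (hx' : a' * (x * x) + b' * x + c' = 0) (hy' : a' * (y * y) + b' * y + c' = 0) :
    a' * c = a * c' := by
  have hlin : ∀ t, a * (t * t) + b * t + c = 0 → a' * (t * t) + b' * t + c' = 0 →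
      (a * b' - a' * b) * t + (a * c' - a' * c) = 0 := fun t h h' => by
    linear_combination a * h' - a' * h
  have hslope : a * b' - a' * b = 0 := by
    refine (mul_eq_zero.mp ?_).resolve_right (sub_ne_zero.mpr hxy)
    linear_combination hlin x hx hx' - hlin y hy hy'
  linear_combination -(hlin x hx hx') + x * hslope

namespace LinearMap.BilinForm

variable {R M : Type*} [CommRing R] [AddCommGroup M] [Module R M]

theorem IsSymm.apply_add_smul_self {f : BilinForm R M} (hf : f.IsSymm) (u w : M) (t : R) :
    f (u + t • w) (u + t • w) = f w w * (t * t) + 2 * f u w * t + f u u := by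
  simp only [map_add, map_smul, LinearMap.add_apply, LinearMap.smul_apply, smul_eq_mul, hf.eq w u]
  ring

variable {V : Type*} [AddCommGroup V] [Module ℝ V] {g β : BilinForm ℝ V}

theorem apply_self_mul_eq_of_pos_of_neg (hg : g.IsSymm) (hβ : β.IsSymm)
    (hβ_null : ∀ v, g v v = 0 → β v v = 0) {u w : V} (hu : 0 < g u u) (hw : g w w < 0) :
    β w w * g u u = g w w * β u u := by
  have hdiscrim : 0 < discrim (g w w) (2 * g u w) (g u u) := by
    rw [discrim]
    nlinarith [sq_nonneg (g u w)]
  obtain ⟨x, y, hxy, hx, hy⟩ := exists_ne_quadratic_eq_zero hw.ne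
    (Real.mul_self_sqrt hdiscrim.le).symm (Real.sqrt_pos.mpr hdiscrim).ne'
  have hβ_line : ∀ t, g w w * (t * t) + 2 * g u w * t + g u u = 0 →
      β w w * (t * t) + 2 * β u w * t + β u u = 0 := fun t ht => by
    rw [← hβ.apply_add_smul_self, hβ_null]
    rwa [hg.apply_add_smul_self]
  exact mul_eq_mul_of_quadratics_eq_zero hxy hx hy (hβ_line x hx) (hβ_line y hy)

theorem exists_forall_apply_self_eq_mul (hg : g.IsSymm) (hβ : β.IsSymm)
    (hβ_null : ∀ v, g v v = 0 → β v v = 0) {x y : V} (hx : 0 < g x x) (hy : g y y < 0) :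
    ∃ c : ℝ, ∀ v, β v v = c * g v v := by
  refine ⟨β y y / g y y, fun v => ?_⟩
  rw [div_mul_eq_mul_div, eq_div_iff hy.ne]
  rcases lt_trichotomy (g v v) 0 with hv | hv | hv
  · have h₁ := apply_self_mul_eq_of_pos_of_neg hg hβ hβ_null hx hv
    have h₂ := apply_self_mul_eq_of_pos_of_neg hg hβ hβ_null hx hy
    refine mul_right_cancel₀ hx.ne' ?_
    linear_combination g y y * h₁ - g v v * h₂
  · rw [hβ_null v hv, hv, zero_mul, mul_zero]
  · linear_combination -apply_self_mul_eq_of_pos_of_neg hg hβ hβ_null hv hy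

end LinearMap.BilinForm

theorem null_cone_determines_form_general
    {V : Type*} [AddCommGroup V] [Module ℝ V]
    (g β : LinearMap.BilinForm ℝ V)
    (hg_symm : ∀ x y : V, g x y = g y x)
    (hg_indef : ∃ x y : V, 0 < g x x ∧ g y y < 0)
    (hβ_symm : ∀ x y : V, β x y = β y x)
    (hβ_null : ∀ v : V, g v v = 0 → β v v = 0) :
    ∃ c : ℝ, β = c • g := by
  have hg : g.IsSymm := ⟨hg_symm⟩
  have hβ : β.IsSymm := ⟨hβ_symm⟩
  obtain ⟨x, y, hx, hy⟩ := hg_indef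
  obtain ⟨c, hc⟩ := LinearMap.BilinForm.exists_forall_apply_self_eq_mul hg hβ hβ_null hx hy
  exact ⟨c, LinearMap.BilinForm.ext_of_isSymm hβ (hg.smul c) hc⟩

/-- If `g` is a nondegenerate indefinite symmetric bilinear form on a finite-dimensional
real vector space and `β` is a symmetric bilinear form vanishing on the null cone of `g`,
then `β` is a multiple of `g`. -/
theorem null_cone_determines_form
    {V : Type*} [AddCommGroup V] [Module ℝ V] [FiniteDimensional ℝ V]
    (g β : LinearMap.BilinForm ℝ V)
    (hg_symm : ∀ x y : V, g x y = g y x)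
    (hg_nd : g.Nondegenerate)
    (hg_indef : ∃ x y : V, 0 < g x x ∧ g y y < 0)
    (hβ_symm : ∀ x y : V, β x y = β y x)
    (hβ_null : ∀ v : V, g v v = 0 → β v v = 0) :
    ∃ c : ℝ, β = c • g :=
  null_cone_determines_form_general g β hg_symm hg_indef hβ_symm hβ_null
end

section
/- Let V be a real vector space, Q a quadratic form on V, and M a Cℓ(Q)-module. Suppose u, v ∈ V satisfy Q(u) = 0, Q(v) = 0 and polar Q(u,v) = 1, so that γ_u γ_v + γ_v γ_u = id_M. Then the kernel of γ_v equals the range of γ_v. (This is the main step in the proof of the paper's Lemma on null vectors; no finite-dimensionality of M is needed.) -/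
namespace CliffordAlgebra

variable {R V M : Type*} [CommRing R] [AddCommGroup V] [Module R V] {Q : QuadraticForm R V}
  [AddCommGroup M] [Module (CliffordAlgebra Q) M]

theorem ι_smul_ι_smul_of_isotropic {v : V} (hv : Q v = 0) (s : M) :
    ι Q v • ι Q v • s = 0 := by
  rw [← mul_smul, ι_sq_scalar, hv, map_zero, zero_smul]

theorem ι_smul_ι_smul_of_polar_eq_one {u v : V} (hpolar : QuadraticMap.polar Q u v = 1)
    {s : M} (hs : ι Q v • s = 0) : ι Q v • ι Q u • s = s := by
  simpa only [hpolar, map_one, one_smul, add_smul, mul_smul, hs, smul_zero, zero_add] using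
    congrArg (· • s) (ι_mul_ι_add_swap (Q := Q) u v)

end CliffordAlgebra

open CliffordAlgebra in
theorem ker_eq_range_of_null_pair_general
    {V : Type*} [AddCommGroup V] [Module ℝ V]
    (Q : QuadraticForm ℝ V)
    {M : Type*} [AddCommGroup M] [Module ℝ M]
    [Module (CliffordAlgebra Q) M] [IsScalarTower ℝ (CliffordAlgebra Q) M]
    (u v : V) (hv : Q v = 0)
    (hpolar : QuadraticMap.polar Q u v = 1) :
    LinearMap.ker (gammaLin Q (M := M) v) = LinearMap.range (gammaLin Q (M := M) v) := by
  refine le_antisymm (fun s hs => ⟨ι Q u • s, ι_smul_ι_smul_of_polar_eq_one hpolar hs⟩) ?_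
  rintro _ ⟨t, rfl⟩
  exact ι_smul_ι_smul_of_isotropic hv t

/-- If `u, v` are null vectors with `polar Q (u, v) = 1`, then on any Clifford module
the kernel of `γ_v` equals the range of `γ_v`. -/
theorem ker_eq_range_of_null_pair
    {V : Type*} [AddCommGroup V] [Module ℝ V]
    (Q : QuadraticForm ℝ V)
    {M : Type*} [AddCommGroup M] [Module ℝ M]
    [Module (CliffordAlgebra Q) M] [IsScalarTower ℝ (CliffordAlgebra Q) M]
    (u v : V) (hu : Q u = 0) (hv : Q v = 0)
    (hpolar : QuadraticMap.polar Q u v = 1) :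
    LinearMap.ker (gammaLin Q (M := M) v) = LinearMap.range (gammaLin Q (M := M) v) :=
  ker_eq_range_of_null_pair_general Q u v hv hpolar
end
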